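/- arXiv:2105.04076 — 2 statements merged into one kernel-verified Lean document; each statement's English description precedes it below -/
import Mathlib

section
/- Let (b_N), (d_N), (b'_N), (d'_N) be non-decreasing sequences of positive integers with b_N·d_N = b'_N·d'_N = M_N for all N, where M_N → ∞, and let ϑ, ϑ' ∈ {−1, 1} with ϑ ≠ ϑ'. Then lim_{N→∞} (1/M_N²) · #{ (i,j) ∈ [M_N]² : Γ_{b_N,d_N}^{(ϑ)}(i,j) = Γ_{b'_N,d'_N}^{(ϑ')}(i,j) } = 0 if and only if lim_{N→∞} b_N·d'_N = ∞ and lim_{N→∞} b'_N·d_N = ∞. -/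
open Filter

/-- The partial transpose `Γ_{b,d}^{(ϑ)} : [N]² → [N]²` for `N = b·d`, as an entry permutation.
Identifying `[N] ≃ [b] × [d]` via `i = a₁·d + a₂` (`0`-based), the right partial transpose
(`θ = true`, i.e. `ϑ = 1`) swaps `a₂` and `a₋₂`, while the left partial transpose (`θ = false`,
i.e. `ϑ = -1`) swaps `a₁` and `a₋₁`. -/
def pt {b d M : ℕ} (θ : Bool) (h : b * d = M) :
    Fin M × Fin M → Fin M × Fin M := fun x =>
  let e : Fin M ≃ Fin b × Fin d := (finCongr h).symm.trans finProdFinEquiv.symm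
  let u := e x.1
  let v := e x.2
  if θ then (e.symm (u.1, v.2), e.symm (v.1, u.2))
  else (e.symm (v.1, u.2), e.symm (u.1, v.2))

/-!
Write `k = d q + r = d' q' + r'` with `r < d`, `r' < d'`. Two opposite partial transposes agree
at `(i, j)` exactly when `i` and `j` have the same key `k - r - r' = d q - r' = d' q' - r`, so the
number `C` of coincidences is the collision count `∑_c #(fiber c)²` of the key on `[M]`.
Since `(q, r')` ranges over `[b] × [d']`, the key takes at most `b d'` values (symmetrically
`b' d`), and Cauchy–Schwarz gives `M² ≤ C · b d'` and `M² ≤ C · b' d`. Conversely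
`k = d q + d' q' - key`, and two keys agree only if `|Δq| ≤ d' / d` and `|Δq'| ≤ d / d'`, so
every fiber has at most `(2 d'/d + 1)(2 d/d' + 1)` elements and `C ≤ 5 M + 2 b d' + 2 b' d`.
As `M² = (b d')(b' d)`, these bounds squeeze `C / M²` between `1 / (b d')`, `1 / (b' d)` and
`5 / M + 2 / (b d') + 2 / (b' d)`.
-/

open Finset Filter Topology

section Collisions

variable {α β : Type*} [Fintype α] [DecidableEq β]

def collisions (f : α → β) : Finset (α × α) :=
  univ.filter fun x => f x.1 = f x.2

lemma card_collisions_eq_sum_sq (f : α → β) :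
    #(collisions f) = ∑ c ∈ univ.image f, #(univ.filter fun x => f x = c) ^ 2 := by
  rw [card_eq_sum_card_fiberwise (f := fun x : α × α => f x.1) (t := univ.image f)
    fun x _ => mem_image_of_mem f (mem_univ x.1)]
  refine sum_congr rfl fun c _ => ?_
  rw [sq, ← card_product]
  congr 1
  ext x
  simp only [collisions, mem_filter, mem_univ, true_and, mem_product]
  constructor
  · rintro ⟨hx, rfl⟩; exact ⟨rfl, hx.symm⟩
  · rintro ⟨h1, h2⟩; exact ⟨h1.trans h2.symm, h1⟩

lemma card_sq_le_card_image_mul_card_collisions (f : α → β) :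
    Fintype.card α ^ 2 ≤ #(univ.image f) * #(collisions f) := by
  rw [card_collisions_eq_sum_sq, ← card_univ, card_eq_sum_card_image f univ]
  exact sq_sum_le_card_mul_sum_sq

lemma card_collisions_le (f : α → β) {K : ℕ} (hK : ∀ y, #(univ.filter fun x => f x = f y) ≤ K) :
    #(collisions f) ≤ Fintype.card α * K := by
  classical
  rw [← card_univ, card_eq_sum_card_fiberwise (f := Prod.snd) (t := univ) fun _ _ => mem_univ _,
    ← smul_eq_mul, ← sum_const]
  refine sum_le_sum fun y _ => le_of_eq_of_le ?_ (hK y)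
  rw [← mul_one #(univ.filter _), ← card_singleton y, ← card_product]
  congr 1
  ext x
  simp only [collisions, mem_filter, mem_univ, true_and, mem_product, mem_singleton]
  constructor
  · rintro ⟨hx, rfl⟩; exact ⟨hx, rfl⟩
  · rintro ⟨hx, rfl⟩; exact ⟨hx, rfl⟩

end Collisions

section PartialTranspose

def ptKey (d d' k : ℕ) : ℤ := k - (k % d : ℕ) - (k % d' : ℕ)

lemma ptKey_comm (d d' k : ℕ) : ptKey d d' k = ptKey d' d k := by
  unfold ptKey; ring

lemma ptKey_eq_mul_div_sub_mod (d d' k : ℕ) : ptKey d d' k = d * (k / d : ℕ) - (k % d' : ℕ) := by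
  have h : (d : ℤ) * (k / d : ℕ) + (k % d : ℕ) = k := by exact_mod_cast Nat.div_add_mod k d
  unfold ptKey
  linarith

lemma mod_add_mul_div_eq_iff_ptKey_eq (d d' i j : ℕ) :
    j % d + d * (i / d) = i % d' + d' * (j / d') ↔ ptKey d d' i = ptKey d d' j := by
  rw [ptKey_eq_mul_div_sub_mod, ptKey_comm d d' j, ptKey_eq_mul_div_sub_mod,
    ← Nat.cast_inj (R := ℤ)]
  push_cast
  constructor <;> intro h <;> linarith

variable {b d b' d' M : ℕ}

lemma pt_true_fst (h : b * d = M) (x : Fin M × Fin M) :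
    ((pt true h x).1 : ℕ) = x.2 % d + d * (x.1 / d) := by
  simp [pt, finProdFinEquiv, Fin.divNat, Fin.modNat, finCongr]

lemma pt_true_snd (h : b * d = M) (x : Fin M × Fin M) :
    ((pt true h x).2 : ℕ) = x.1 % d + d * (x.2 / d) := by
  simp [pt, finProdFinEquiv, Fin.divNat, Fin.modNat, finCongr]

lemma pt_false_eq_swap (h : b * d = M) (x : Fin M × Fin M) :
    pt false h x = (pt true h x).swap := by
  simp [pt]

lemma pt_eq_pt_iff (h : b * d = M) (h' : b' * d' = M) {θ θ' : Bool} (hθ : θ ≠ θ')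
    (x : Fin M × Fin M) :
    pt θ h x = pt θ' h' x ↔ ptKey d d' x.1 = ptKey d d' x.2 := by
  have key : pt true h x = (pt true h' x).swap ↔ ptKey d d' x.1 = ptKey d d' x.2 := by
    rw [Prod.ext_iff, Fin.ext_iff, Fin.ext_iff, Prod.fst_swap, Prod.snd_swap, pt_true_fst,
      pt_true_snd, pt_true_fst, pt_true_snd, mod_add_mul_div_eq_iff_ptKey_eq,
      mod_add_mul_div_eq_iff_ptKey_eq, eq_comm (a := ptKey d d' x.2), and_self]
  cases θ <;> cases θ' <;> simp only [ne_eq, not_true_eq_false] at hθ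
  · rw [pt_false_eq_swap, Prod.swap_eq_iff_eq_swap, key]
  · rw [pt_false_eq_swap, key]

end PartialTranspose

section Counting

variable {b d b' d' M : ℕ}

lemma card_image_ptKey_le (hd' : 0 < d') (h : b * d = M) :
    #(univ.image fun k : Fin M => ptKey d d' k) ≤ b * d' := by
  calc #(univ.image fun k : Fin M => ptKey d d' k)
      ≤ #((range b ×ˢ range d').image fun p : ℕ × ℕ => (d : ℤ) * p.1 - p.2) := by
        refine card_le_card fun c hc => ?_
        obtain ⟨k, -, rfl⟩ := mem_image.mp hc
        refine mem_image.mpr ⟨((k : ℕ) / d, (k : ℕ) % d'), ?_, ?_⟩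
        · simp only [mem_product, mem_range]
          exact ⟨Nat.div_lt_of_lt_mul (by rw [mul_comm, h]; exact k.2), Nat.mod_lt _ hd'⟩
        · exact (ptKey_eq_mul_div_sub_mod d d' k).symm
    _ ≤ b * d' := card_image_le.trans (by simp)

lemma sq_le_card_collisions_ptKey_mul (hd' : 0 < d') (h : b * d = M) :
    M ^ 2 ≤ #(collisions fun k : Fin M => ptKey d d' k) * (b * d') := by
  have hcs := card_sq_le_card_image_mul_card_collisions fun k : Fin M => ptKey d d' k
  rw [Fintype.card_fin, mul_comm] at hcs
  exact hcs.trans (Nat.mul_le_mul_left _ (card_image_ptKey_le hd' h))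

lemma abs_sub_div_le_of_ptKey_eq (hd : 0 < d) (hd' : 0 < d') {i j : ℕ}
    (h : ptKey d d' i = ptKey d d' j) : |((i / d : ℕ) : ℤ) - (j / d : ℕ)| ≤ (d' / d : ℕ) := by
  rw [ptKey_eq_mul_div_sub_mod, ptKey_eq_mul_div_sub_mod] at h
  have hmul : (((i / d : ℕ) : ℤ) - (j / d : ℕ)) * d = (i % d' : ℕ) - (j % d' : ℕ) := by
    linarith
  have hrem : |((i % d' : ℕ) : ℤ) - (j % d' : ℕ)| < d' :=
    abs_sub_lt_of_nonneg_of_lt (by positivity) (by exact_mod_cast Nat.mod_lt i hd')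
      (by positivity) (by exact_mod_cast Nat.mod_lt j hd')
  have hd0 : (0 : ℤ) < d := by exact_mod_cast hd
  have hle : |(((i / d : ℕ) : ℤ) - (j / d : ℕ)) * d| ≤ d' := hmul ▸ hrem.le
  rw [abs_mul, abs_of_pos hd0] at hle
  push_cast
  exact Int.le_ediv_of_mul_le hd0 hle

lemma card_ptKey_fiber_le (hd : 0 < d) (hd' : 0 < d') (j : ℕ) :
    #(univ.filter fun i : Fin M => ptKey d d' i = ptKey d d' j) ≤
      (2 * (d' / d) + 1) * (2 * (d / d') + 1) := by
  set A := d' / d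
  set B := d / d'
  have hrec (k : ℕ) : (k : ℤ) = d * (k / d : ℕ) + d' * (k / d' : ℕ) - ptKey d d' k := by
    have h1 : (d : ℤ) * (k / d : ℕ) + (k % d : ℕ) = k := by exact_mod_cast Nat.div_add_mod k d
    have h2 : (d' : ℤ) * (k / d' : ℕ) + (k % d' : ℕ) = k := by exact_mod_cast Nat.div_add_mod k d'
    unfold ptKey
    linarith
  let box : Finset (ℤ × ℤ) :=
    Icc ((j / d : ℕ) - (A : ℤ)) ((j / d : ℕ) + A) ×ˢ Icc ((j / d' : ℕ) - (B : ℤ)) ((j / d' : ℕ) + B)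
  have hbox : #box = (2 * A + 1) * (2 * B + 1) := by
    rw [card_product, Int.card_Icc, Int.card_Icc]
    congr 1 <;> omega
  rw [← hbox]
  refine card_le_card_of_injOn
    (fun i : Fin M => ((((i : ℕ) / d : ℕ) : ℤ), (((i : ℕ) / d' : ℕ) : ℤ)))
    (fun i hi => ?_) (fun i hi i' hi' hii' => ?_)
  · simp only [coe_filter, mem_univ, true_and, Set.mem_ofPred_eq] at hi
    have h1 := abs_sub_div_le_of_ptKey_eq hd hd' hi
    have h2 := abs_sub_div_le_of_ptKey_eq (i := i) (j := j) hd' hd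
      (by rw [ptKey_comm, ptKey_comm d' d j]; exact hi)
    rw [abs_le] at h1 h2
    simp only [box, coe_product, Set.mem_prod, coe_Icc, Set.mem_Icc]
    omega
  · simp only [coe_filter, mem_univ, true_and, Set.mem_ofPred_eq] at hi hi'
    simp only [Prod.mk.injEq] at hii'
    have hi_eq := hrec i
    rw [hii'.1, hii'.2, hi, ← hi'] at hi_eq
    exact Fin.ext (by exact_mod_cast hi_eq.trans (hrec i').symm)

lemma two_mul_div_add_one_mul_le (m n : ℕ) : (2 * (m / n) + 1) * n ≤ 2 * m + n := by
  have := Nat.div_mul_le_self m n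
  nlinarith

lemma card_collisions_ptKey_le (hd : 0 < d) (hd' : 0 < d') (h : b * d = M) (h' : b' * d' = M) :
    #(collisions fun k : Fin M => ptKey d d' k) ≤ 5 * M + 2 * (b * d') + 2 * (b' * d) := by
  have hC := card_collisions_le (fun k : Fin M => ptKey d d' k) fun y =>
    card_ptKey_fiber_le hd hd' y
  rw [Fintype.card_fin] at hC
  have hK : (2 * (d' / d) + 1) * (2 * (d / d') + 1) * (d * d') ≤ (2 * d' + d) * (2 * d + d') := by
    calc _ = (2 * (d' / d) + 1) * d * ((2 * (d / d') + 1) * d') := by ring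
      _ ≤ _ := Nat.mul_le_mul (two_mul_div_add_one_mul_le d' d) (two_mul_div_add_one_mul_le d d')
  have hM : M * ((2 * d' + d) * (2 * d + d')) =
      (5 * M + 2 * (b * d') + 2 * (b' * d)) * (d * d') := by
    zify at h h' ⊢
    linear_combination (-2 * (d' : ℤ) ^ 2) * h + (-2 * (d : ℤ) ^ 2) * h'
  refine Nat.le_of_mul_le_mul_right ?_ (Nat.mul_pos hd hd')
  calc _ ≤ M * ((2 * (d' / d) + 1) * (2 * (d / d') + 1)) * (d * d') := Nat.mul_le_mul_right _ hC
    _ ≤ M * ((2 * d' + d) * (2 * d + d')) := by rw [mul_assoc]; exact Nat.mul_le_mul_left M hK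
    _ = _ := hM

end Counting

lemma tendsto_atTop_of_inv_le {x : ℕ → ℕ} {r : ℕ → ℝ} (hx : ∀ n, 0 < x n)
    (hr : Tendsto r atTop (𝓝 0)) (h : ∀ n, (x n : ℝ)⁻¹ ≤ r n) : Tendsto x atTop atTop := by
  have hinv : Tendsto (fun n => (x n : ℝ)⁻¹) atTop (𝓝[>] 0) :=
    tendsto_nhdsWithin_iff.mpr ⟨squeeze_zero (fun n => by positivity) h hr,
      Eventually.of_forall fun n => by simpa using hx n⟩
  rw [← tendsto_natCast_atTop_iff (R := ℝ)]
  simpa [Pi.inv_def] using hinv.inv_tendsto_nhdsGT_zero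

lemma tendsto_div_sq_zero_iff {C x y M : ℕ → ℕ} (hx : ∀ n, 0 < x n) (hy : ∀ n, 0 < y n)
    (hM : Tendsto M atTop atTop) (hxy : ∀ n, M n ^ 2 = x n * y n)
    (hCx : ∀ n, M n ^ 2 ≤ C n * x n) (hCy : ∀ n, M n ^ 2 ≤ C n * y n)
    (hC : ∀ n, C n ≤ 5 * M n + 2 * x n + 2 * y n) :
    Tendsto (fun n => (C n : ℝ) / (M n : ℝ) ^ 2) atTop (𝓝 0) ↔
      Tendsto x atTop atTop ∧ Tendsto y atTop atTop := by
  have hMpos (n : ℕ) : 0 < M n := by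
    have := Nat.mul_pos (hx n) (hy n)
    rw [← hxy n] at this
    exact Nat.pos_of_ne_zero fun h0 => by simp [h0] at this
  have hlow {z : ℕ → ℕ} (hz : ∀ n, 0 < z n) (hCz : ∀ n, M n ^ 2 ≤ C n * z n) (n : ℕ) :
      (z n : ℝ)⁻¹ ≤ C n / M n ^ 2 := by
    have := hz n
    have := hMpos n
    rw [le_div_iff₀ (by positivity), inv_mul_le_iff₀ (by positivity)]
    exact_mod_cast (hCz n).trans_eq (mul_comm _ _)
  have hup (n : ℕ) : (C n : ℝ) / M n ^ 2 ≤ 5 * (M n : ℝ)⁻¹ + 2 * (y n : ℝ)⁻¹ + 2 * (x n : ℝ)⁻¹ := by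
    have := hx n
    have := hy n
    have := hMpos n
    have hxyR : (M n : ℝ) ^ 2 = x n * y n := by exact_mod_cast hxy n
    rw [div_le_iff₀ (by positivity)]
    calc (C n : ℝ) ≤ 5 * M n + 2 * x n + 2 * y n := by exact_mod_cast hC n
      _ = _ := by
        field_simp
        linear_combination (-2 * (x n : ℝ) - 2 * y n) * hxyR
  constructor
  · intro h
    exact ⟨tendsto_atTop_of_inv_le hx h (hlow hx hCx), tendsto_atTop_of_inv_le hy h (hlow hy hCy)⟩
  · rintro ⟨hxt, hyt⟩
    have hinv {z : ℕ → ℕ} (hz : Tendsto z atTop atTop) :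
        Tendsto (fun n => (z n : ℝ)⁻¹) atTop (𝓝 0) :=
      tendsto_inv_atTop_zero.comp (tendsto_natCast_atTop_atTop.comp hz)
    refine squeeze_zero (fun n => by positivity) hup ?_
    simpa using (((hinv hM).const_mul 5).add ((hinv hyt).const_mul 2)).add ((hinv hxt).const_mul 2)

theorem stmt_8_general (b d b' d' M : ℕ → ℕ)
    (hb : ∀ n, 0 < b n) (hd : ∀ n, 0 < d n) (hb' : ∀ n, 0 < b' n) (hd' : ∀ n, 0 < d' n)
    (hM : ∀ n, b n * d n = M n) (hM' : ∀ n, b' n * d' n = M n)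
    (hMtop : Tendsto M atTop atTop) (θ θ' : Bool) (hθ : θ ≠ θ') :
    Tendsto
      (fun n => ((Finset.univ.filter fun x : Fin (M n) × Fin (M n) =>
          pt θ (hM n) x = pt θ' (hM' n) x).card : ℝ) / (M n : ℝ) ^ 2)
      atTop (nhds 0)
    ↔ (Tendsto (fun n => b n * d' n) atTop atTop
      ∧ Tendsto (fun n => b' n * d n) atTop atTop) := by
  have hcoll (n : ℕ) : (univ.filter fun x : Fin (M n) × Fin (M n) =>
      pt θ (hM n) x = pt θ' (hM' n) x) = collisions fun k : Fin (M n) => ptKey (d n) (d' n) k := by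
    ext x
    simp only [collisions, mem_filter, mem_univ, true_and, pt_eq_pt_iff (hM n) (hM' n) hθ]
  simp only [hcoll]
  refine tendsto_div_sq_zero_iff (fun n => Nat.mul_pos (hb n) (hd' n))
    (fun n => Nat.mul_pos (hb' n) (hd n)) hMtop (fun n => ?_)
    (fun n => sq_le_card_collisions_ptKey_mul (hd' n) (hM n)) (fun n => ?_)
    (fun n => card_collisions_ptKey_le (hd n) (hd' n) (hM n) (hM' n))
  · calc M n ^ 2 = (b n * d n) * (b' n * d' n) := by rw [hM, hM', sq]
      _ = _ := by ring
  · simpa only [ptKey_comm (d' n) (d n)] using sq_le_card_collisions_ptKey_mul (hd n) (hM' n)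

/-- for non-decreasing sequences of positive integers with
`b_N·d_N = b'_N·d'_N = M_N → ∞` and opposite `ϑ ≠ ϑ'` in `{−1,1}` (encoded by `θ ≠ θ'`),
`(1/M_N²)·#{(i,j) : Γ_{b_N,d_N}^{(ϑ)}(i,j) = Γ_{b'_N,d'_N}^{(ϑ')}(i,j)} → 0` iff
`b_N·d'_N → ∞` and `b'_N·d_N → ∞`. -/
theorem stmt_8 (b d b' d' M : ℕ → ℕ)
    (hbm : Monotone b) (hdm : Monotone d) (hb'm : Monotone b') (hd'm : Monotone d')
    (hb : ∀ n, 0 < b n) (hd : ∀ n, 0 < d n) (hb' : ∀ n, 0 < b' n) (hd' : ∀ n, 0 < d' n)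
    (hM : ∀ n, b n * d n = M n) (hM' : ∀ n, b' n * d' n = M n)
    (hMtop : Tendsto M atTop atTop) (θ θ' : Bool) (hθ : θ ≠ θ') :
    Tendsto
      (fun n => ((Finset.univ.filter fun x : Fin (M n) × Fin (M n) =>
          pt θ (hM n) x = pt θ' (hM' n) x).card : ℝ) / (M n : ℝ) ^ 2)
      atTop (nhds 0)
    ↔ (Tendsto (fun n => b n * d' n) atTop atTop
      ∧ Tendsto (fun n => b' n * d n) atTop atTop) :=
  stmt_8_general b d b' d' M hb hd hb' hd' hM hM' hMtop θ θ' hθ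
end

section
/- Let (b_N), (d_N), (b'_N), (d'_N) be non-decreasing sequences of positive integers with b_N·d_N = b'_N·d'_N = M_N for all N, where M_N → ∞, and let ϑ, ϑ' ∈ {−1, 1}. Write Γ_N = Γ_{b_N, d_N}^{(ϑ)} and Γ'_N = Γ_{b'_N, d'_N}^{(ϑ')}. Then lim_{N→∞} E[ tr( U_{M_N}^{Γ_N} (U_{M_N}^{Γ'_N})* ) ] = 0 if and only if lim_{N→∞} (1/M_N²) · #{ (i,j) ∈ [M_N]² : Γ_N(i,j) = Γ'_N(i,j) } = 0. -/
open Filter MeasureTheory Matrix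

/-- For a map `σ : [N]² → [N]²`, `U^σ` is the matrix whose `(i,j)` entry is `U_{σ(i,j)}`. -/
def entryMap {N : ℕ} (σ : Fin N × Fin N → Fin N × Fin N)
    (U : Matrix (Fin N) (Fin N) ℂ) : Matrix (Fin N) (Fin N) ℂ :=
  Matrix.of fun i j => U (σ (i, j)).1 (σ (i, j)).2

noncomputable instance (N : ℕ) : MeasurableSpace (Matrix.unitaryGroup (Fin N) ℂ) := borel _

/-!
Left invariance of Haar measure under a diagonal sign matrix and under permutation matrices,
together with unitarity, gives the second moments `E[U_{ab} conj U_{cd}] = δ_{(a,b),(c,d)} / N`.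
Hence, for any maps `σ σ' : [N]² → [N]²`, `E[tr(U^σ (U^σ')*)] = #{σ = σ'} / N²` exactly, so the
two sequences in the theorem coincide (the first viewed in `ℂ`).
-/

open ComplexConjugate

instance (N : ℕ) : BorelSpace (unitaryGroup (Fin N) ℂ) := ⟨rfl⟩

lemma Equiv.Perm.permMatrix_mem_unitaryGroup {n : Type*} [Fintype n] [DecidableEq n]
    (σ : Equiv.Perm n) : σ.permMatrix ℂ ∈ unitaryGroup n ℂ := by
  rw [mem_unitaryGroup_iff', star_eq_conjTranspose, conjTranspose_permMatrix,
    ← permMatrix_mul, mul_inv_cancel, permMatrix_one]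

namespace Matrix.unitaryGroup

variable {n : Type*} [Fintype n] [DecidableEq n] [MeasurableSpace (unitaryGroup n ℂ)]
  [BorelSpace (unitaryGroup n ℂ)] (μ : Measure (unitaryGroup n ℂ))

lemma integrable_entry_mul_conj_entry [IsFiniteMeasure μ] (a b c d : n) :
    Integrable (fun U : unitaryGroup n ℂ =>
      (U : Matrix n n ℂ) a b * conj ((U : Matrix n n ℂ) c d)) μ := by
  have hentry (i j : n) : Continuous fun U : unitaryGroup n ℂ => (U : Matrix n n ℂ) i j :=
    continuous_subtype_val.matrix_elem i j
  refine Integrable.of_bound (Continuous.aestronglyMeasurable ?_) 1 (ae_of_all μ fun U => ?_)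
  · exact (hentry a b).mul (Complex.continuous_conj.comp (hentry c d))
  · rw [norm_mul, Complex.norm_conj]
    exact mul_le_one₀ (entry_norm_bound_of_unitary U.2 a b) (norm_nonneg _)
      (entry_norm_bound_of_unitary U.2 c d)

variable [μ.IsMulLeftInvariant]

/-- Left multiplication by the unitary `diag(-1 at a, 1 elsewhere)` flips the sign of the
integrand while preserving `μ`. -/
lemma integral_entry_mul_conj_entry_of_ne {a c : n} (h : a ≠ c) (b d : n) :
    ∫ U : unitaryGroup n ℂ, (U : Matrix n n ℂ) a b * conj ((U : Matrix n n ℂ) c d) ∂μ = 0 :=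
    by
  let v : n → ℂ := fun i => if i = a then -1 else 1
  have hD : diagonal v ∈ unitaryGroup n ℂ := by
    rw [mem_unitaryGroup_iff, star_eq_conjTranspose, diagonal_conjTranspose,
      diagonal_mul_diagonal, ← diagonal_one]
    congr 1
    funext i
    by_cases hi : i = a <;> simp [v, hi]
  have := integral_mul_left_eq_self (μ := μ)
    (fun U : unitaryGroup n ℂ => (U : Matrix n n ℂ) a b * conj ((U : Matrix n n ℂ) c d))
    ⟨diagonal v, hD⟩
  simp only [Submonoid.coe_mul, diagonal_mul, v, if_true, if_neg h.symm, one_mul, neg_mul,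
    integral_neg] at this
  exact self_eq_neg.mp this.symm

lemma integral_entry_mul_conj_entry_row_eq (a a' b d : n) :
    ∫ U : unitaryGroup n ℂ, (U : Matrix n n ℂ) a b * conj ((U : Matrix n n ℂ) a d) ∂μ =
      ∫ U : unitaryGroup n ℂ, (U : Matrix n n ℂ) a' b * conj ((U : Matrix n n ℂ) a' d) ∂μ :=
    by
  have := integral_mul_left_eq_self (μ := μ)
    (fun U : unitaryGroup n ℂ => (U : Matrix n n ℂ) a b * conj ((U : Matrix n n ℂ) a d))
    ⟨(Equiv.swap a a').permMatrix ℂ, (Equiv.swap a a').permMatrix_mem_unitaryGroup⟩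
  simp only [Submonoid.coe_mul, PEquiv.toMatrix_toPEquiv_mul, submatrix_apply, id_eq,
    Equiv.swap_apply_left] at this
  exact this.symm

variable [IsProbabilityMeasure μ]

/-- Summing over the row index gives `(Uᴴ U)_{db} = δ_{bd}`, and all rows contribute equally. -/
lemma integral_entry_mul_conj_entry_same_row (a b d : n) :
    ∫ U : unitaryGroup n ℂ, (U : Matrix n n ℂ) a b * conj ((U : Matrix n n ℂ) a d) ∂μ =
      if b = d then (Fintype.card n : ℂ)⁻¹ else 0 := by
  have hsum : ∑ a' : n, ∫ U : unitaryGroup n ℂ,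
      (U : Matrix n n ℂ) a' b * conj ((U : Matrix n n ℂ) a' d) ∂μ = if b = d then 1 else 0 :=
    by
    rw [← integral_finsetSum _ fun a' _ => integrable_entry_mul_conj_entry μ a' b a' d]
    have hcol (U : unitaryGroup n ℂ) :
        ∑ a', (U : Matrix n n ℂ) a' b * conj ((U : Matrix n n ℂ) a' d) =
          if b = d then 1 else 0 := by
      have := congr_fun₂ (mem_unitaryGroup_iff'.mp U.2) d b
      simp only [mul_apply, star_apply, one_apply, Complex.star_def] at this
      simpa only [mul_comm _ (conj _), eq_comm] using this
    simp [hcol]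
  simp_rw [← integral_entry_mul_conj_entry_row_eq μ a, Finset.sum_const, Finset.card_univ,
    nsmul_eq_mul] at hsum
  have : Nonempty n := ⟨a⟩
  have hcard : (Fintype.card n : ℂ) ≠ 0 := Nat.cast_ne_zero.mpr Fintype.card_ne_zero
  rw [← mul_right_inj' hcard, hsum]
  split_ifs <;> simp [hcard]

lemma integral_entry_mul_conj_entry (p q : n × n) :
    ∫ U : unitaryGroup n ℂ,
      (U : Matrix n n ℂ) p.1 p.2 * conj ((U : Matrix n n ℂ) q.1 q.2) ∂μ =
      if p = q then (Fintype.card n : ℂ)⁻¹ else 0 := by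
  obtain ⟨a, b⟩ := p
  obtain ⟨c, d⟩ := q
  by_cases hac : a = c
  · subst hac
    simp [integral_entry_mul_conj_entry_same_row]
  · simp [integral_entry_mul_conj_entry_of_ne μ hac, hac]

end Matrix.unitaryGroup

lemma integral_trace_entryMap_mul_conjTranspose {N : ℕ} (μ : Measure (unitaryGroup (Fin N) ℂ))
    [μ.IsMulLeftInvariant] [IsProbabilityMeasure μ] (σ σ' : Fin N × Fin N → Fin N × Fin N) :
    ∫ U : unitaryGroup (Fin N) ℂ,
      (entryMap σ (U : Matrix (Fin N) (Fin N) ℂ)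
        * (entryMap σ' (U : Matrix (Fin N) (Fin N) ℂ))ᴴ).trace / (N : ℂ) ∂μ =
      (((Finset.univ.filter fun x => σ x = σ' x).card / (N : ℝ) ^ 2 : ℝ) : ℂ) := by
  have htrace (U : unitaryGroup (Fin N) ℂ) :
      (entryMap σ (U : Matrix (Fin N) (Fin N) ℂ)
        * (entryMap σ' (U : Matrix (Fin N) (Fin N) ℂ))ᴴ).trace =
        ∑ x, (U : Matrix (Fin N) (Fin N) ℂ) (σ x).1 (σ x).2 *
          conj ((U : Matrix (Fin N) (Fin N) ℂ) (σ' x).1 (σ' x).2) := by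
    simp [trace, mul_apply, entryMap, Fintype.sum_prod_type]
  simp_rw [htrace, integral_div]
  rw [integral_finsetSum _ fun x _ => unitaryGroup.integrable_entry_mul_conj_entry μ _ _ _ _]
  simp_rw [unitaryGroup.integral_entry_mul_conj_entry, ← Finset.sum_filter, Finset.sum_const,
    nsmul_eq_mul, Fintype.card_fin]
  push_cast
  ring

theorem stmt_14_general (b d b' d' M : ℕ → ℕ)
    (hM : ∀ n, b n * d n = M n) (hM' : ∀ n, b' n * d' n = M n)
    (θ θ' : Bool)
    (μ : ∀ n, Measure (Matrix.unitaryGroup (Fin (M n)) ℂ))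
    (hμ : ∀ n, (μ n).IsHaarMeasure) (hμp : ∀ n, IsProbabilityMeasure (μ n)) :
    Tendsto
      (fun n => ∫ U : Matrix.unitaryGroup (Fin (M n)) ℂ,
        (entryMap (pt θ (hM n)) (U : Matrix (Fin (M n)) (Fin (M n)) ℂ)
          * (entryMap (pt θ' (hM' n)) (U : Matrix (Fin (M n)) (Fin (M n)) ℂ))ᴴ).trace
            / (M n : ℂ) ∂(μ n))
      atTop (nhds 0)
    ↔ Tendsto
      (fun n => ((Finset.univ.filter fun x : Fin (M n) × Fin (M n) =>
          pt θ (hM n) x = pt θ' (hM' n) x).card : ℝ) / (M n : ℝ) ^ 2)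
      atTop (nhds 0) := by
  have hexpect (n : ℕ) := by
    have := hμ n
    have := hμp n
    exact integral_trace_entryMap_mul_conjTranspose (μ n) (pt θ (hM n)) (pt θ' (hM' n))
  simp_rw [hexpect, ← Complex.ofReal_zero]
  exact tendsto_ofReal_iff

/-- for non-decreasing sequences of positive integers with
`b_N·d_N = b'_N·d'_N = M_N → ∞` and `ϑ, ϑ' ∈ {−1,1}` (encoded by `θ, θ' : Bool`), writing
`Γ_N = Γ_{b_N,d_N}^{(ϑ)}` and `Γ'_N = Γ_{b'_N,d'_N}^{(ϑ')}`:
`E[tr(U_{M_N}^{Γ_N}(U_{M_N}^{Γ'_N})*)] → 0` iff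
`(1/M_N²)·#{(i,j) : Γ_N(i,j) = Γ'_N(i,j)} → 0`. -/
theorem stmt_14 (b d b' d' M : ℕ → ℕ)
    (hbm : Monotone b) (hdm : Monotone d) (hb'm : Monotone b') (hd'm : Monotone d')
    (hb : ∀ n, 0 < b n) (hd : ∀ n, 0 < d n) (hb' : ∀ n, 0 < b' n) (hd' : ∀ n, 0 < d' n)
    (hM : ∀ n, b n * d n = M n) (hM' : ∀ n, b' n * d' n = M n)
    (hMtop : Tendsto M atTop atTop) (θ θ' : Bool)
    (μ : ∀ n, Measure (Matrix.unitaryGroup (Fin (M n)) ℂ))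
    (hμ : ∀ n, (μ n).IsHaarMeasure) (hμp : ∀ n, IsProbabilityMeasure (μ n)) :
    Tendsto
      (fun n => ∫ U : Matrix.unitaryGroup (Fin (M n)) ℂ,
        (entryMap (pt θ (hM n)) (U : Matrix (Fin (M n)) (Fin (M n)) ℂ)
          * (entryMap (pt θ' (hM' n)) (U : Matrix (Fin (M n)) (Fin (M n)) ℂ))ᴴ).trace
            / (M n : ℂ) ∂(μ n))
      atTop (nhds 0)
    ↔ Tendsto
      (fun n => ((Finset.univ.filter fun x : Fin (M n) × Fin (M n) =>
          pt θ (hM n) x = pt θ' (hM' n) x).card : ℝ) / (M n : ℝ) ^ 2)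
      atTop (nhds 0) :=
  stmt_14_general b d b' d' M hM hM' θ θ' μ hμ hμp
end
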